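/- Under the discrete harmonicity and connectivity assumptions, the solution to the Tutte linear system exists and is unique: given boundary values b : B → ℝ, there is exactly one x : V → ℝ with x_i = ∑_j w_{ij} x_j for all i ∈ I and x_j = b_j for all j ∈ B. -/
import Mathlib

lemma aux_le (V : Type*) [Fintype V] [DecidableEq V]
    (I : Finset V) (hB : Iᶜ.Nonempty)
    (w : V → V → ℝ)
    (hw : ∀ i ∈ I, ∀ j, 0 ≤ w i j)
    (hws : ∀ i ∈ I, ∑ j, w i j = 1)
    (hconn : ∀ i ∈ I, ∃ j, j ∉ I ∧ Relation.ReflTransGen (fun a b => 0 < w a b) i j)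
    (x : V → ℝ) (hx : ∀ i ∈ I, x i = ∑ j, w i j * x j)
    (hx0 : ∀ j ∉ I, x j = 0) : ∀ v, x v ≤ 0 := by
  haveI : Nonempty V := ⟨hB.choose⟩
  set M := Finset.univ.sup' Finset.univ_nonempty x with hM
  have hle : ∀ v, x v ≤ M := fun v => Finset.le_sup' x (Finset.mem_univ v)
  -- key propagation lemma
  have key : ∀ a ∈ I, x a = M → ∀ c, 0 < w a c → x c = M := by
    intro a ha hxa c hc
    have h1 : ∀ j ∈ Finset.univ, w a j * x j ≤ w a j * M := fun j _ =>
      mul_le_mul_of_nonneg_left (hle j) (hw a ha j)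
    have h2 : ∑ j, w a j * M = M := by
      rw [← Finset.sum_mul, hws a ha, one_mul]
    have h3 : ∑ j, w a j * x j = ∑ j, w a j * M := by
      rw [h2, ← hxa, hx a ha]
    have h4 := (Finset.sum_eq_sum_iff_of_le h1).mp h3 c (Finset.mem_univ c)
    exact mul_left_cancel₀ (ne_of_gt hc) h4
  have prop : ∀ a j, Relation.ReflTransGen (fun p q => 0 < w p q) a j →
      x a = M → j ∉ I → M ≤ 0 := by
    intro a j hpath
    induction hpath using Relation.ReflTransGen.head_induction_on with
    | refl => intro hxa hj; rw [← hxa, hx0 _ hj]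
    | head hac _ ih =>
      rename_i p q _
      intro hxp hj
      by_cases hp : p ∈ I
      · exact ih (key p hp hxp q hac) hj
      · rw [← hxp, hx0 _ hp]
  obtain ⟨i, _, hi⟩ := Finset.exists_mem_eq_sup' Finset.univ_nonempty x
  have hMle : M ≤ 0 := by
    by_cases hiI : i ∈ I
    · obtain ⟨j, hj, hpath⟩ := hconn i hiI
      exact prop i j hpath hi.symm hj
    · rw [hM, hi, hx0 _ hiI]
  exact fun v => (hle v).trans hMle

lemma aux_zero (V : Type*) [Fintype V] [DecidableEq V]
    (I : Finset V) (hB : Iᶜ.Nonempty)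
    (w : V → V → ℝ)
    (hw : ∀ i ∈ I, ∀ j, 0 ≤ w i j)
    (hws : ∀ i ∈ I, ∑ j, w i j = 1)
    (hconn : ∀ i ∈ I, ∃ j, j ∉ I ∧ Relation.ReflTransGen (fun a b => 0 < w a b) i j)
    (x : V → ℝ) (hx : ∀ i ∈ I, x i = ∑ j, w i j * x j)
    (hx0 : ∀ j ∉ I, x j = 0) : x = 0 := by
  have h1 := aux_le V I hB w hw hws hconn x hx hx0
  have h2 := aux_le V I hB w hw hws hconn (-x)
    (by intro i hi; simp only [Pi.neg_apply, hx i hi, Finset.mul_sum, ← Finset.sum_neg_distrib]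
        congr 1; ext j; ring)
    (by intro j hj; simp [hx0 j hj])
  funext v
  have := h2 v
  simp only [Pi.neg_apply, neg_nonpos] at this
  exact le_antisymm (h1 v) this

/-- existence and uniqueness of the solution to the Tutte linear
system: given boundary values `b`, there is exactly one `x` that is
discrete-harmonic on the interior `I` and equal to `b` on the boundary `Iᶜ`. -/
theorem stmt11 (V : Type*) [Fintype V] [DecidableEq V]
    (I : Finset V) (hB : Iᶜ.Nonempty)
    (w : V → V → ℝ)
    (hw : ∀ i ∈ I, ∀ j, 0 ≤ w i j)
    (hwd : ∀ i ∈ I, w i i = 0)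
    (hws : ∀ i ∈ I, ∑ j, w i j = 1)
    (hconn : ∀ i ∈ I, ∃ j, j ∉ I ∧ Relation.ReflTransGen (fun a b => 0 < w a b) i j)
    (b : V → ℝ) :
    ∃! x : V → ℝ, (∀ i ∈ I, x i = ∑ j, w i j * x j) ∧ ∀ j ∉ I, x j = b j := by
  classical
  -- the linear map of the system
  let T : (V → ℝ) →ₗ[ℝ] (V → ℝ) :=
    { toFun := fun x i => if i ∈ I then x i - ∑ j, w i j * x j else x i
      map_add' := by
        intro x y; funext i
        by_cases hi : i ∈ I <;>
          simp [hi, mul_add, Finset.sum_add_distrib] <;> ring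
      map_smul' := by
        intro c x; funext i
        by_cases hi : i ∈ I <;>
          simp [hi, Finset.mul_sum, smul_eq_mul, mul_sub] <;>
        · congr 1; ext j; ring }
  have hTinj : Function.Injective T := by
    rw [injective_iff_map_eq_zero]
    intro x hx
    have hxI : ∀ i ∈ I, x i = ∑ j, w i j * x j := by
      intro i hi
      have := congrFun hx i
      simp only [T, LinearMap.coe_mk, AddHom.coe_mk, hi, if_true, Pi.zero_apply] at this
      linarith
    have hxB : ∀ j ∉ I, x j = 0 := by
      intro j hj
      have := congrFun hx j
      simpa [T, hj] using this
    exact aux_zero V I hB w hw hws hconn x hxI hxB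
  have hTsurj : Function.Surjective T :=
    (LinearMap.injective_iff_surjective).mp hTinj
  obtain ⟨x, hx⟩ := hTsurj (fun j => if j ∈ I then 0 else b j)
  refine ⟨x, ⟨?_, ?_⟩, ?_⟩
  · intro i hi
    have := congrFun hx i
    simp only [T, LinearMap.coe_mk, AddHom.coe_mk, hi, if_true] at this
    linarith
  · intro j hj
    have := congrFun hx j
    simpa [T, hj] using this
  · intro y ⟨hyI, hyB⟩
    apply hTinj
    rw [hx]
    funext i
    by_cases hi : i ∈ I <;> simp [T, hi]
    · linarith [hyI i hi]
    · exact hyB i hi
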